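/- arXiv:2311.06934 — 3 statements merged into one kernel-verified Lean document; each statement's English description precedes it below -/
import Mathlib

section
/- Four points v₁, v₂, v₃, v₄ ∈ ℝ³ are affinely independent (do not lie in a common plane) if and only if their Cayley–Menger determinant D is strictly positive. -/
/-!
With `uᵢ = v (i + 1) -ᵥ v 0`, each squared distance is `⟪uᵢ, uᵢ⟫ - 2 ⟪uᵢ, uⱼ⟫ + ⟪uⱼ, uⱼ⟫`, and a
polynomial identity turns the Cayley–Menger determinant of four points into `8 · det (gram ℝ u)`.
A Gram matrix is positive semidefinite, so this determinant is nonnegative, and it vanishes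
exactly when the `uᵢ` are linearly dependent, i.e. when the points are affinely dependent.
-/

open Matrix
open scoped InnerProductSpace

theorem affineIndependent_iff_linearIndependent_vsub_zero {k V P : Type*} [Ring k]
    [AddCommGroup V] [Module k V] [AddTorsor V P] {n : ℕ} (p : Fin (n + 1) → P) :
    AffineIndependent k p ↔ LinearIndependent k fun i : Fin n ↦ p i.succ -ᵥ p 0 := by
  rw [affineIndependent_iff_linearIndependent_vsub k p 0,
    ← linearIndependent_equiv (finSuccAboveEquiv 0)]
  rfl

theorem det_cayleyMenger_eq {R : Type*} [CommRing R] (p q r s t u : R) :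
    det !![0, p, q, r, 1;
         p, 0, p - 2 * s + q, p - 2 * t + r, 1;
         q, p - 2 * s + q, 0, q - 2 * u + r, 1;
         r, p - 2 * t + r, q - 2 * u + r, 0, 1;
         1, 1, 1, 1, 0] =
      8 * det !![p, s, t; s, q, u; t, u, r] := by
  simp only [det_succ_row_zero, det_unique, Fin.sum_univ_succ, Finset.univ_unique,
    Finset.sum_singleton, Fin.succAbove, submatrix_apply, of_apply, cons_val', cons_val_fin_one,
    cons_val, Fin.reduceSucc, Fin.reduceCastSucc, Fin.reduceLT, Fin.default_eq_zero, Fin.isValue,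
    Fin.val_succ, Fin.coe_ofNat_eq_mod, Nat.reduceMod, ↓reduceIte, Fin.castSucc_zero,
    Fin.succ_zero_eq_one, Fin.succ_one_eq_two, Fin.lt_one_iff, Fin.succ_pos, Fin.reduceEq, not_lt_zero]
  ring

section CayleyMenger

variable {V P : Type*} [NormedAddCommGroup V] [InnerProductSpace ℝ V] [MetricSpace P]
  [NormedAddTorsor V P]

theorem dist_sq_eq_inner_vsub (o a b : P) :
    dist a b ^ 2 = ⟪a -ᵥ o, a -ᵥ o⟫_ℝ - 2 * ⟪a -ᵥ o, b -ᵥ o⟫_ℝ + ⟪b -ᵥ o, b -ᵥ o⟫_ℝ := by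
  rw [dist_eq_norm_vsub V, ← vsub_sub_vsub_cancel_right a b o, norm_sub_sq_real,
    real_inner_self_eq_norm_sq, real_inner_self_eq_norm_sq]

theorem gram_fin_three (u : Fin 3 → V) :
    gram ℝ u = !![⟪u 0, u 0⟫_ℝ, ⟪u 0, u 1⟫_ℝ, ⟪u 0, u 2⟫_ℝ;
                 ⟪u 0, u 1⟫_ℝ, ⟪u 1, u 1⟫_ℝ, ⟪u 1, u 2⟫_ℝ;
                 ⟪u 0, u 2⟫_ℝ, ⟪u 1, u 2⟫_ℝ, ⟪u 2, u 2⟫_ℝ] := by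
  ext i j
  fin_cases i <;> fin_cases j <;> first | rfl | exact real_inner_comm _ _

noncomputable def cayleyMengerMatrix {n : ℕ} (v : Fin n → P) :
    Matrix (Fin n ⊕ Fin 1) (Fin n ⊕ Fin 1) ℝ :=
  fromBlocks (of fun i j ↦ dist (v i) (v j) ^ 2) (of fun _ _ ↦ 1) (of fun _ _ ↦ 1) 0

theorem reindex_cayleyMengerMatrix (v : Fin 4 → P) :
    reindex finSumFinEquiv finSumFinEquiv (cayleyMengerMatrix v) =
      !![0, dist (v 0) (v 1) ^ 2, dist (v 0) (v 2) ^ 2, dist (v 0) (v 3) ^ 2, 1;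
         dist (v 0) (v 1) ^ 2, 0, dist (v 1) (v 2) ^ 2, dist (v 1) (v 3) ^ 2, 1;
         dist (v 0) (v 2) ^ 2, dist (v 1) (v 2) ^ 2, 0, dist (v 2) (v 3) ^ 2, 1;
         dist (v 0) (v 3) ^ 2, dist (v 1) (v 3) ^ 2, dist (v 2) (v 3) ^ 2, 0, 1;
         1, 1, 1, 1, 0] := by
  ext i j
  fin_cases i <;> fin_cases j <;>
    simp [cayleyMengerMatrix, finSumFinEquiv, Fin.addCases, Fin.castLT]
  all_goals exact dist_comm _ _

theorem det_cayleyMengerMatrix_eq (v : Fin 4 → P) :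
    det (cayleyMengerMatrix v) = 8 * det (gram ℝ fun i : Fin 3 ↦ v i.succ -ᵥ v 0) := by
  have hdist (i j : Fin 4) := dist_sq_eq_inner_vsub (v 0) (v i) (v j)
  rw [← det_reindex_self finSumFinEquiv, reindex_cayleyMengerMatrix, gram_fin_three,
    ← det_cayleyMenger_eq]
  simp only [hdist, vsub_self, inner_zero_left, inner_zero_right, mul_zero, sub_zero, zero_add]
  rfl

theorem affineIndependent_iff_det_cayleyMengerMatrix_pos (v : Fin 4 → P) :
    AffineIndependent ℝ v ↔ 0 < det (cayleyMengerMatrix v) := by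
  rw [affineIndependent_iff_linearIndependent_vsub_zero,
    ← det_gram_ne_zero_iff_linearIndependent (𝕜 := ℝ), det_cayleyMengerMatrix_eq,
    mul_pos_iff_of_pos_left (by norm_num)]
  exact (posSemidef_gram ℝ _).det_nonneg.lt_iff_ne'.symm

end CayleyMenger

/-- Four points in ℝ³ are affinely independent iff their Cayley–Menger determinant is
strictly positive. -/
theorem affineIndependent_iff_cayleyMenger_pos (v₁ v₂ v₃ v₄ : EuclideanSpace ℝ (Fin 3)) :
    AffineIndependent ℝ ![v₁, v₂, v₃, v₄] ↔
      0 < Matrix.det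
        !![0, dist v₁ v₂ ^ 2, dist v₁ v₃ ^ 2, dist v₁ v₄ ^ 2, 1;
           dist v₁ v₂ ^ 2, 0, dist v₂ v₃ ^ 2, dist v₂ v₄ ^ 2, 1;
           dist v₁ v₃ ^ 2, dist v₂ v₃ ^ 2, 0, dist v₃ v₄ ^ 2, 1;
           dist v₁ v₄ ^ 2, dist v₂ v₄ ^ 2, dist v₃ v₄ ^ 2, 0, 1;
           1, 1, 1, 1, 0] := by
  rw [affineIndependent_iff_det_cayleyMengerMatrix_pos, ← det_reindex_self finSumFinEquiv,
    reindex_cayleyMengerMatrix]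
  rfl
end

section
/- The Schläfli formula holds for a Euclidean tetrahedron: for any smooth one-parameter family of non-degenerate tetrahedra in ℝ³ with edge lengths l_e(t) and dihedral angles α_e(t), one has Σ_e l_e(t) · (d/dt) α_e(t) = 0, where the sum is over the six edges. -/
open Real

/-- The interior dihedral angle of a tetrahedron along the edge `pq`, between the faces
`pqa` and `pqb`. -/
noncomputable def dihedralAngle (p q a b : EuclideanSpace ℝ (Fin 3)) : ℝ :=
  InnerProductGeometry.angle
    (a - p - ((inner ℝ (a - p) (q - p) : ℝ) / (inner ℝ (q - p) (q - p) : ℝ)) • (q - p))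
    (b - p - ((inner ℝ (b - p) (q - p) : ℝ) / (inner ℝ (q - p) (q - p) : ℝ)) • (q - p))


noncomputable section
local notation "E3" => EuclideanSpace ℝ (Fin 3)
local notation "⟪" x ", " y "⟫" => @inner ℝ _ _ x y

/-- cross product -/
def cp (x y : E3) : E3 := WithLp.toLp 2 ![x 1 * y 2 - x 2 * y 1, x 2 * y 0 - x 0 * y 2, x 0 * y 1 - x 1 * y 0]

lemma cp_apply (x y : E3) (i : Fin 3) : cp x y i = ![x 1 * y 2 - x 2 * y 1, x 2 * y 0 - x 0 * y 2, x 0 * y 1 - x 1 * y 0] i := rfl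

lemma inner3 (x y : E3) : ⟪x, y⟫ = x 0 * y 0 + x 1 * y 1 + x 2 * y 2 := by
  simp [PiLp.inner_apply, Fin.sum_univ_three]
  ring

lemma inner_cp_cp (u x y : E3) :
    ⟪cp u x, cp u y⟫ = ⟪u,u⟫ * ⟪x,y⟫ - ⟪u,x⟫ * ⟪u,y⟫ := by
  simp only [inner3, cp_apply]
  simp [Fin.isValue, Matrix.cons_val_zero, Matrix.cons_val_one, Matrix.head_cons,
    Matrix.cons_val_two, Matrix.tail_cons]
  ring

lemma sub3 (x y : E3) (i : Fin 3) : (x - y) i = x i - y i := rfl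
lemma neg3 (x : E3) (i : Fin 3) : (-x) i = -(x i) := rfl
lemma add3 (x y : E3) (i : Fin 3) : (x + y) i = x i + y i := rfl

lemma cp_neg_sub (x y : E3) : cp (y - x) (-x) = cp x y := by
  ext i
  fin_cases i <;>
    simp [cp_apply, sub3, neg3, Fin.isValue, Matrix.cons_val_zero, Matrix.cons_val_one,
      Matrix.head_cons] <;> ring

lemma cp_sub_sub (x y z : E3) : cp (y - x) (z - x) = cp x y + cp y z + cp z x := by
  ext i
  fin_cases i <;>
    simp [cp_apply, sub3, add3, Fin.isValue, Matrix.cons_val_zero, Matrix.cons_val_one,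
      Matrix.head_cons] <;> ring

lemma cp_anti (x y : E3) : cp y x = - cp x y := by
  ext i
  fin_cases i <;>
    simp [cp_apply, neg3, Fin.isValue, Matrix.cons_val_zero, Matrix.cons_val_one,
      Matrix.head_cons] <;> ring

lemma inner_cp_left (x y : E3) : ⟪x, cp x y⟫ = 0 := by
  simp only [inner3, cp_apply]
  simp [Fin.isValue, Matrix.cons_val_zero, Matrix.cons_val_one, Matrix.head_cons]
  ring

lemma inner_cp_right (x y : E3) : ⟪x, cp y x⟫ = 0 := by
  simp only [inner3, cp_apply]
  simp [Fin.isValue, Matrix.cons_val_zero, Matrix.cons_val_one, Matrix.head_cons]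
  ring

lemma lag2 (u x y : E3) :
    ⟪cp u x, cp u x⟫ * ⟪cp u y, cp u y⟫ - ⟪cp u x, cp u y⟫ ^ 2
      = ⟪u, cp x y⟫ ^ 2 * ⟪u, u⟫ := by
  simp only [inner3, cp_apply]
  simp [Fin.isValue, Matrix.cons_val_zero, Matrix.cons_val_one, Matrix.head_cons]
  ring

lemma div_div_aux (A B U : ℝ) (hU : U ≠ 0) : A / U / (B / U) = A / B := by
  rcases eq_or_ne B 0 with rfl | hB
  · simp
  · field_simp

lemma proj_inner (u x y : E3) (hU : ⟪u, u⟫ ≠ 0) :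
    ⟪x - (⟪x, u⟫ / ⟪u, u⟫) • u, y - (⟪y, u⟫ / ⟪u, u⟫) • u⟫ = ⟪cp u x, cp u y⟫ / ⟪u, u⟫ := by
  rw [inner_cp_cp]
  simp only [inner_sub_left, inner_sub_right, real_inner_smul_left, real_inner_smul_right]
  rw [real_inner_comm x u, real_inner_comm y u]
  set U := (⟪u, u⟫ : ℝ) with hUdef
  set X := (⟪x, u⟫ : ℝ)
  set Y := (⟪y, u⟫ : ℝ)
  set A := (⟪x, y⟫ : ℝ)
  field_simp
  ring

lemma proj_norm (u x : E3) (hU : 0 < ⟪u, u⟫) :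
    ‖x - (⟪x, u⟫ / ⟪u, u⟫) • u‖ = ‖cp u x‖ / Real.sqrt ⟪u, u⟫ := by
  rw [norm_eq_sqrt_real_inner, proj_inner u x x hU.ne',
    Real.sqrt_div real_inner_self_nonneg, ← norm_eq_sqrt_real_inner]

lemma dihedral_eq (p q a b : E3) (hq : q ≠ p) :
    dihedralAngle p q a b =
      Real.arccos (⟪cp (q - p) (a - p), cp (q - p) (b - p)⟫ /
        (‖cp (q - p) (a - p)‖ * ‖cp (q - p) (b - p)‖)) := by
  have hU : (0:ℝ) < ⟪q - p, q - p⟫ := by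
    rw [real_inner_self_eq_norm_sq]
    exact pow_pos (norm_pos_iff.2 (sub_ne_zero.2 hq)) 2
  unfold dihedralAngle InnerProductGeometry.angle
  rw [proj_inner _ _ _ hU.ne', proj_norm _ _ hU, proj_norm _ _ hU, div_mul_div_comm,
    Real.mul_self_sqrt hU.le, div_div_aux _ _ _ hU.ne']

lemma det_ne_zero (w : Fin 4 → E3) (h : AffineIndependent ℝ w) :
    ⟪w 1 - w 0, cp (w 2 - w 0) (w 3 - w 0)⟫ ≠ 0 := by
  have h' := (affineIndependent_iff_linearIndependent_vsub ℝ w 0).1 h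
  let e : Fin 3 → {x : Fin 4 // x ≠ 0} := fun i => ⟨i.succ, Fin.succ_ne_zero i⟩
  have he : Function.Injective e := by
    intro a b hab
    simpa [e, Fin.succ_inj] using hab
  have h2 : LinearIndependent ℝ (fun i : Fin 3 => w (e i).1 -ᵥ w 0) := h'.comp e he
  set M : Matrix (Fin 3) (Fin 3) ℝ :=
    Matrix.of ![(w 1 - w 0 : E3), (w 2 - w 0 : E3), (w 3 - w 0 : E3)] with hM
  have h3 : LinearIndependent ℝ (fun i => M i) := by
    have : (fun i => M i) = fun i : Fin 3 => WithLp.ofLp (w (e i).1 -ᵥ w 0) := by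
      funext i
      fin_cases i <;> simp [M, e, vsub_eq_sub] <;> rfl
    rw [this]
    exact h2.map' (WithLp.linearEquiv 2 ℝ (Fin 3 → ℝ)).toLinearMap
      (WithLp.linearEquiv 2 ℝ (Fin 3 → ℝ)).ker
  have h4 : M.det ≠ 0 :=
    ((Matrix.isUnit_iff_isUnit_det M).1 (Matrix.linearIndependent_rows_iff_isUnit.1 h3)).ne_zero
  have h5 : ⟪w 1 - w 0, cp (w 2 - w 0) (w 3 - w 0)⟫ = M.det := by
    rw [Matrix.det_fin_three, inner3]
    simp only [cp_apply, M, Matrix.of_apply, Matrix.cons_val', Matrix.cons_val_zero,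
      Matrix.cons_val_one, Matrix.head_cons, Matrix.cons_val_two, Matrix.tail_cons,
      Matrix.empty_val', Matrix.cons_val_fin_one, Matrix.head_fin_const]
    ring
  rw [h5]
  exact h4

lemma mul_div_self_aux (n a : ℝ) (hn : n ≠ 0) : -n ^ 2 * (a / (2 * n ^ 2)) = -a / 2 := by
  field_simp

set_option maxHeartbeats 1600000 in
/-- The core algebraic identity behind the Schläfli formula. Indices `0..3` are faces;
`a i = ⟪m i, m i⟫`, `b i j = ⟪m i, m j⟫`, primes are derivatives, `n i = √(a i)`. -/
lemma key_algebra
    (a0 a1 a2 a3 b01 b02 b03 b12 b13 b23 : ℝ)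
    (a0' a1' a2' a3' b01' b02' b03' b12' b13' b23' : ℝ)
    (n0 n1 n2 n3 : ℝ)
    (hn0 : 0 < n0) (hn1 : 0 < n1) (hn2 : 0 < n2) (hn3 : 0 < n3)
    (e0 : n0 ^ 2 = a0) (e1 : n1 ^ 2 = a1) (e2 : n2 ^ 2 = a2) (e3 : n3 ^ 2 = a3)
    (r0 : a0 + b01 + b02 + b03 = 0) (r1 : b01 + a1 + b12 + b13 = 0)
    (r2 : b02 + b12 + a2 + b23 = 0) (r3 : b03 + b13 + b23 + a3 = 0)
    (r0' : a0' + b01' + b02' + b03' = 0) (r1' : b01' + a1' + b12' + b13' = 0)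
    (r2' : b02' + b12' + a2' + b23' = 0) (r3' : b03' + b13' + b23' + a3' = 0) :
    n0 * n1 * ((-b01' * (n0 * n1) - -b01 * (a0' / (2 * n0) * n1 + n0 * (a1' / (2 * n1)))) / (n0 * n1) ^ 2) +
    n0 * n2 * ((-b02' * (n0 * n2) - -b02 * (a0' / (2 * n0) * n2 + n0 * (a2' / (2 * n2)))) / (n0 * n2) ^ 2) +
    n0 * n3 * ((-b03' * (n0 * n3) - -b03 * (a0' / (2 * n0) * n3 + n0 * (a3' / (2 * n3)))) / (n0 * n3) ^ 2) +
    n1 * n2 * ((-b12' * (n1 * n2) - -b12 * (a1' / (2 * n1) * n2 + n1 * (a2' / (2 * n2)))) / (n1 * n2) ^ 2) +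
    n1 * n3 * ((-b13' * (n1 * n3) - -b13 * (a1' / (2 * n1) * n3 + n1 * (a3' / (2 * n3)))) / (n1 * n3) ^ 2) +
    n2 * n3 * ((-b23' * (n2 * n3) - -b23 * (a2' / (2 * n2) * n3 + n2 * (a3' / (2 * n3)))) / (n2 * n3) ^ 2)
      = 0 := by
  have h01 : n0 * n1 * ((-b01' * (n0 * n1) - -b01 * (a0' / (2 * n0) * n1 + n0 * (a1' / (2 * n1)))) / (n0 * n1) ^ 2)
      = -b01' + b01 * (a0' / (2 * n0 ^ 2)) + b01 * (a1' / (2 * n1 ^ 2)) := by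
    field_simp
    ring
  have h02 : n0 * n2 * ((-b02' * (n0 * n2) - -b02 * (a0' / (2 * n0) * n2 + n0 * (a2' / (2 * n2)))) / (n0 * n2) ^ 2)
      = -b02' + b02 * (a0' / (2 * n0 ^ 2)) + b02 * (a2' / (2 * n2 ^ 2)) := by
    field_simp
    ring
  have h03 : n0 * n3 * ((-b03' * (n0 * n3) - -b03 * (a0' / (2 * n0) * n3 + n0 * (a3' / (2 * n3)))) / (n0 * n3) ^ 2)
      = -b03' + b03 * (a0' / (2 * n0 ^ 2)) + b03 * (a3' / (2 * n3 ^ 2)) := by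
    field_simp
    ring
  have h12 : n1 * n2 * ((-b12' * (n1 * n2) - -b12 * (a1' / (2 * n1) * n2 + n1 * (a2' / (2 * n2)))) / (n1 * n2) ^ 2)
      = -b12' + b12 * (a1' / (2 * n1 ^ 2)) + b12 * (a2' / (2 * n2 ^ 2)) := by
    field_simp
    ring
  have h13 : n1 * n3 * ((-b13' * (n1 * n3) - -b13 * (a1' / (2 * n1) * n3 + n1 * (a3' / (2 * n3)))) / (n1 * n3) ^ 2)
      = -b13' + b13 * (a1' / (2 * n1 ^ 2)) + b13 * (a3' / (2 * n3 ^ 2)) := by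
    field_simp
    ring
  have h23 : n2 * n3 * ((-b23' * (n2 * n3) - -b23 * (a2' / (2 * n2) * n3 + n2 * (a3' / (2 * n3)))) / (n2 * n3) ^ 2)
      = -b23' + b23 * (a2' / (2 * n2 ^ 2)) + b23 * (a3' / (2 * n3 ^ 2)) := by
    field_simp
    ring
  rw [h01, h02, h03, h12, h13, h23]
  have hb' : b01' + b02' + b03' + b12' + b13' + b23' = -(a0' + a1' + a2' + a3') / 2 := by
    linarith
  have s0 : b01 * (a0' / (2 * n0 ^ 2)) + b02 * (a0' / (2 * n0 ^ 2)) + b03 * (a0' / (2 * n0 ^ 2))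
      = -a0' / 2 := by
    have hb : b01 + b02 + b03 = -n0 ^ 2 := by rw [e0]; linarith
    have : b01 * (a0' / (2 * n0 ^ 2)) + b02 * (a0' / (2 * n0 ^ 2)) + b03 * (a0' / (2 * n0 ^ 2))
        = (b01 + b02 + b03) * (a0' / (2 * n0 ^ 2)) := by ring
    rw [this, hb]
    exact mul_div_self_aux _ _ hn0.ne'
  have s1 : b01 * (a1' / (2 * n1 ^ 2)) + b12 * (a1' / (2 * n1 ^ 2)) + b13 * (a1' / (2 * n1 ^ 2))
      = -a1' / 2 := by
    have hb : b01 + b12 + b13 = -n1 ^ 2 := by rw [e1]; linarith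
    have : b01 * (a1' / (2 * n1 ^ 2)) + b12 * (a1' / (2 * n1 ^ 2)) + b13 * (a1' / (2 * n1 ^ 2))
        = (b01 + b12 + b13) * (a1' / (2 * n1 ^ 2)) := by ring
    rw [this, hb]
    exact mul_div_self_aux _ _ hn1.ne'
  have s2 : b02 * (a2' / (2 * n2 ^ 2)) + b12 * (a2' / (2 * n2 ^ 2)) + b23 * (a2' / (2 * n2 ^ 2))
      = -a2' / 2 := by
    have hb : b02 + b12 + b23 = -n2 ^ 2 := by rw [e2]; linarith
    have : b02 * (a2' / (2 * n2 ^ 2)) + b12 * (a2' / (2 * n2 ^ 2)) + b23 * (a2' / (2 * n2 ^ 2))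
        = (b02 + b12 + b23) * (a2' / (2 * n2 ^ 2)) := by ring
    rw [this, hb]
    exact mul_div_self_aux _ _ hn2.ne'
  have s3 : b03 * (a3' / (2 * n3 ^ 2)) + b13 * (a3' / (2 * n3 ^ 2)) + b23 * (a3' / (2 * n3 ^ 2))
      = -a3' / 2 := by
    have hb : b03 + b13 + b23 = -n3 ^ 2 := by rw [e3]; linarith
    have : b03 * (a3' / (2 * n3 ^ 2)) + b13 * (a3' / (2 * n3 ^ 2)) + b23 * (a3' / (2 * n3 ^ 2))
        = (b03 + b13 + b23) * (a3' / (2 * n3 ^ 2)) := by ring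
    rw [this, hb]
    exact mul_div_self_aux _ _ hn3.ne'
  linear_combination (-1) * hb' + s0 + s1 + s2 + s3

lemma differentiable_coord {f : ℝ → E3} (hf : Differentiable ℝ f) (i : Fin 3) :
    Differentiable ℝ (fun s => f s i) :=
  (EuclideanSpace.proj (𝕜 := ℝ) i).differentiable.comp hf

lemma differentiable_cp {f g : ℝ → E3} (hf : Differentiable ℝ f) (hg : Differentiable ℝ g) :
    Differentiable ℝ (fun s => cp (f s) (g s)) := by
  have hfi := differentiable_coord hf
  have hgi := differentiable_coord hg
  have h : Differentiable ℝ (fun s => (fun i => cp (f s) (g s) i : Fin 3 → ℝ)) := by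
    apply differentiable_pi.2
    intro i
    fin_cases i
    · exact ((hfi 1).mul (hgi 2)).sub ((hfi 2).mul (hgi 1))
    · exact ((hfi 2).mul (hgi 0)).sub ((hfi 0).mul (hgi 2))
    · exact ((hfi 0).mul (hgi 1)).sub ((hfi 1).mul (hgi 0))
  exact (EuclideanSpace.equiv (Fin 3) ℝ).symm.differentiable.comp h

lemma edge_deriv (α : ℝ → ℝ) (gij gii gjj : ℝ → ℝ) (Aij Aii Ajj : ℝ) (t : ℝ)
    (hij : HasDerivAt gij Aij t) (hii : HasDerivAt gii Aii t) (hjj : HasDerivAt gjj Ajj t)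
    (hiipos : 0 < gii t) (hjjpos : 0 < gjj t)
    (hF : α = fun s => Real.arccos (-gij s / (Real.sqrt (gii s) * Real.sqrt (gjj s))))
    (L D : ℝ) (hL : 0 < L) (hD : 0 < D)
    (hlag : gii t * gjj t - gij t ^ 2 = D ^ 2 * L ^ 2) :
    L * deriv α t =
      -(1 / D) * (Real.sqrt (gii t) * Real.sqrt (gjj t) *
        ((-Aij * (Real.sqrt (gii t) * Real.sqrt (gjj t)) -
            -gij t * (Aii / (2 * Real.sqrt (gii t)) * Real.sqrt (gjj t) +
              Real.sqrt (gii t) * (Ajj / (2 * Real.sqrt (gjj t))))) /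
          (Real.sqrt (gii t) * Real.sqrt (gjj t)) ^ 2)) := by
  set ni := Real.sqrt (gii t) with hni_def
  set nj := Real.sqrt (gjj t) with hnj_def
  have hni : 0 < ni := Real.sqrt_pos.2 hiipos
  have hnj : 0 < nj := Real.sqrt_pos.2 hjjpos
  have hni2 : ni ^ 2 = gii t := Real.sq_sqrt hiipos.le
  have hnj2 : nj ^ 2 = gjj t := Real.sq_sqrt hjjpos.le
  set C := (-Aij * (ni * nj) - -gij t * (Aii / (2 * ni) * nj + ni * (Ajj / (2 * nj)))) /
      (ni * nj) ^ 2 with hC_def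
  set c : ℝ → ℝ := fun s => -gij s / (Real.sqrt (gii s) * Real.sqrt (gjj s)) with hc_def
  have hc : HasDerivAt c C t :=
    (hij.neg).div ((hii.sqrt hiipos.ne').mul (hjj.sqrt hjjpos.ne')) (by positivity)
  have hct : c t = -gij t / (ni * nj) := rfl
  have key1 : 1 - c t ^ 2 = (D * L / (ni * nj)) ^ 2 := by
    rw [hct]
    field_simp
    nlinarith [hlag, hni2, hnj2]
  have hsq : Real.sqrt (1 - c t ^ 2) = D * L / (ni * nj) := by
    rw [key1, Real.sqrt_sq (by positivity)]
  have hct2 : c t ^ 2 < 1 := by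
    have hpos : 0 < (D * L / (ni * nj)) ^ 2 := by positivity
    nlinarith [key1, hpos]
  have h1 : c t ≠ -1 := by intro h; rw [h] at hct2; norm_num at hct2
  have h2 : c t ≠ 1 := by intro h; rw [h] at hct2; norm_num at hct2
  have hda : HasDerivAt α (-(1 / Real.sqrt (1 - c t ^ 2)) * C) t := by
    rw [hF]
    exact (Real.hasDerivAt_arccos h1 h2).comp t hc
  rw [hda.deriv, hsq]
  field_simp

lemma tri_cyc (a b c : E3) : ⟪c, cp a b⟫ = ⟪a, cp b c⟫ := by
  simp only [inner3, cp_apply]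
  simp [Fin.isValue, Matrix.cons_val_zero, Matrix.cons_val_one, Matrix.head_cons]
  ring

lemma tri_swap (a b c : E3) : ⟪b, cp a c⟫ = -⟪a, cp b c⟫ := by
  simp only [inner3, cp_apply]
  simp [Fin.isValue, Matrix.cons_val_zero, Matrix.cons_val_one, Matrix.head_cons]
  ring

lemma tri_sub (a b c : E3) : ⟪b - a, cp (-a) (c - a)⟫ = ⟪a, cp b c⟫ := by
  simp only [inner3, cp_apply, sub3, neg3]
  simp [Fin.isValue, Matrix.cons_val_zero, Matrix.cons_val_one, Matrix.head_cons]
  ring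

/-- (Twice the) outward-ish area vector of the face of the tetrahedron opposite vertex 1. -/
def m1f (v : ℝ → Fin 4 → EuclideanSpace ℝ (Fin 3)) : ℝ → E3 :=
  fun s => cp (v s 2 - v s 0) (v s 3 - v s 0)

def m2f (v : ℝ → Fin 4 → EuclideanSpace ℝ (Fin 3)) : ℝ → E3 :=
  fun s => cp (v s 3 - v s 0) (v s 1 - v s 0)

def m3f (v : ℝ → Fin 4 → EuclideanSpace ℝ (Fin 3)) : ℝ → E3 :=
  fun s => cp (v s 1 - v s 0) (v s 2 - v s 0)

def m0f (v : ℝ → Fin 4 → EuclideanSpace ℝ (Fin 3)) : ℝ → E3 :=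
  fun s => -(m1f v s + m2f v s + m3f v s)

lemma msum (v : ℝ → Fin 4 → EuclideanSpace ℝ (Fin 3)) (s : ℝ) :
    m0f v s + m1f v s + m2f v s + m3f v s = 0 := by
  simp [m0f]; abel

section gdefs
variable (v : ℝ → Fin 4 → EuclideanSpace ℝ (Fin 3))

def g00f : ℝ → ℝ := fun s => ⟪m0f v s, m0f v s⟫
def g01f : ℝ → ℝ := fun s => ⟪m0f v s, m1f v s⟫
def g02f : ℝ → ℝ := fun s => ⟪m0f v s, m2f v s⟫
def g03f : ℝ → ℝ := fun s => ⟪m0f v s, m3f v s⟫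
def g11f : ℝ → ℝ := fun s => ⟪m1f v s, m1f v s⟫
def g12f : ℝ → ℝ := fun s => ⟪m1f v s, m2f v s⟫
def g13f : ℝ → ℝ := fun s => ⟪m1f v s, m3f v s⟫
def g22f : ℝ → ℝ := fun s => ⟪m2f v s, m2f v s⟫
def g23f : ℝ → ℝ := fun s => ⟪m2f v s, m3f v s⟫
def g33f : ℝ → ℝ := fun s => ⟪m3f v s, m3f v s⟫

lemma row0 (s : ℝ) : g00f v s + g01f v s + g02f v s + g03f v s = 0 := by
  simp only [g00f, g01f, g02f, g03f, ← inner_add_right]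
  rw [msum, inner_zero_right]

lemma row1 (s : ℝ) : g01f v s + g11f v s + g12f v s + g13f v s = 0 := by
  simp only [g01f, g11f, g12f, g13f]
  rw [real_inner_comm (m1f v s) (m0f v s)]
  simp only [← inner_add_right]
  rw [show m0f v s + m1f v s + m2f v s + m3f v s = 0 from msum v s, inner_zero_right]

lemma row2 (s : ℝ) : g02f v s + g12f v s + g22f v s + g23f v s = 0 := by
  simp only [g02f, g12f, g22f, g23f]
  rw [real_inner_comm (m2f v s) (m0f v s), real_inner_comm (m2f v s) (m1f v s)]
  simp only [← inner_add_right]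
  rw [show m0f v s + m1f v s + m2f v s + m3f v s = 0 from msum v s, inner_zero_right]

lemma row3 (s : ℝ) : g03f v s + g13f v s + g23f v s + g33f v s = 0 := by
  simp only [g03f, g13f, g23f, g33f]
  rw [real_inner_comm (m3f v s) (m0f v s), real_inner_comm (m3f v s) (m1f v s),
    real_inner_comm (m3f v s) (m2f v s)]
  simp only [← inner_add_right]
  rw [show m0f v s + m1f v s + m2f v s + m3f v s = 0 from msum v s, inner_zero_right]

end gdefs

section diffg
variable {v : ℝ → Fin 4 → EuclideanSpace ℝ (Fin 3)}
variable (hv : ∀ i, Differentiable ℝ fun s => v s i)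
include hv

lemma diff_m1 : Differentiable ℝ (m1f v) :=
  differentiable_cp ((hv 2).sub (hv 0)) ((hv 3).sub (hv 0))

lemma diff_m2 : Differentiable ℝ (m2f v) :=
  differentiable_cp ((hv 3).sub (hv 0)) ((hv 1).sub (hv 0))

lemma diff_m3 : Differentiable ℝ (m3f v) :=
  differentiable_cp ((hv 1).sub (hv 0)) ((hv 2).sub (hv 0))

lemma diff_m0 : Differentiable ℝ (m0f v) :=
  (((diff_m1 hv).add (diff_m2 hv)).add (diff_m3 hv)).neg

lemma diff_g00 : Differentiable ℝ (g00f v) := (diff_m0 hv).inner ℝ (diff_m0 hv)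
lemma diff_g01 : Differentiable ℝ (g01f v) := (diff_m0 hv).inner ℝ (diff_m1 hv)
lemma diff_g02 : Differentiable ℝ (g02f v) := (diff_m0 hv).inner ℝ (diff_m2 hv)
lemma diff_g03 : Differentiable ℝ (g03f v) := (diff_m0 hv).inner ℝ (diff_m3 hv)
lemma diff_g11 : Differentiable ℝ (g11f v) := (diff_m1 hv).inner ℝ (diff_m1 hv)
lemma diff_g12 : Differentiable ℝ (g12f v) := (diff_m1 hv).inner ℝ (diff_m2 hv)
lemma diff_g13 : Differentiable ℝ (g13f v) := (diff_m1 hv).inner ℝ (diff_m3 hv)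
lemma diff_g22 : Differentiable ℝ (g22f v) := (diff_m2 hv).inner ℝ (diff_m2 hv)
lemma diff_g23 : Differentiable ℝ (g23f v) := (diff_m2 hv).inner ℝ (diff_m3 hv)
lemma diff_g33 : Differentiable ℝ (g33f v) := (diff_m3 hv).inner ℝ (diff_m3 hv)

end diffg

lemma edge_fun_eq (p q a b : ℝ → E3) (hpq : ∀ s, q s ≠ p s) (G Gi Gj : ℝ → ℝ)
    (h1 : ∀ s, ⟪cp (q s - p s) (a s - p s), cp (q s - p s) (b s - p s)⟫ = -G s)
    (h2 : ∀ s, ‖cp (q s - p s) (a s - p s)‖ = Real.sqrt (Gi s))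
    (h3 : ∀ s, ‖cp (q s - p s) (b s - p s)‖ = Real.sqrt (Gj s)) :
    (fun s => dihedralAngle (p s) (q s) (a s) (b s)) =
      fun s => Real.arccos (-G s / (Real.sqrt (Gi s) * Real.sqrt (Gj s))) := by
  funext s
  rw [dihedral_eq _ _ _ _ (hpq s), h1 s, h2 s, h3 s]

/-- If some vector pairs to a nonzero value with `x`, then `⟪x,x⟫ > 0`. -/
lemma inner_self_pos_of (x w : E3) (h : ⟪w, x⟫ ≠ 0) : 0 < ⟪x, x⟫ := by
  have hx : x ≠ 0 := by rintro rfl; simp at h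
  rw [real_inner_self_eq_norm_sq]
  exact pow_pos (norm_pos_iff.2 hx) 2

section cpid
variable (v : ℝ → Fin 4 → EuclideanSpace ℝ (Fin 3)) (s : ℝ)

lemma c01x : cp (v s 1 - v s 0) (v s 2 - v s 0) = m3f v s := rfl
lemma c01y : cp (v s 1 - v s 0) (v s 3 - v s 0) = -(m2f v s) := cp_anti _ _
lemma c02x : cp (v s 2 - v s 0) (v s 1 - v s 0) = -(m3f v s) := cp_anti _ _
lemma c02y : cp (v s 2 - v s 0) (v s 3 - v s 0) = m1f v s := rfl
lemma c03x : cp (v s 3 - v s 0) (v s 1 - v s 0) = m2f v s := rfl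
lemma c03y : cp (v s 3 - v s 0) (v s 2 - v s 0) = -(m1f v s) := cp_anti _ _

lemma c12x : cp (v s 2 - v s 1) (v s 0 - v s 1) = m3f v s := by
  rw [show v s 2 - v s 1 = (v s 2 - v s 0) - (v s 1 - v s 0) by abel,
    show v s 0 - v s 1 = -(v s 1 - v s 0) by abel, cp_neg_sub]
  rfl

lemma c12y : cp (v s 2 - v s 1) (v s 3 - v s 1) = -(m0f v s) := by
  rw [show v s 2 - v s 1 = (v s 2 - v s 0) - (v s 1 - v s 0) by abel,
    show v s 3 - v s 1 = (v s 3 - v s 0) - (v s 1 - v s 0) by abel, cp_sub_sub]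
  simp only [m0f, m1f, m2f, m3f, neg_neg]
  abel

lemma c13x : cp (v s 3 - v s 1) (v s 0 - v s 1) = -(m2f v s) := by
  rw [show v s 3 - v s 1 = (v s 3 - v s 0) - (v s 1 - v s 0) by abel,
    show v s 0 - v s 1 = -(v s 1 - v s 0) by abel, cp_neg_sub]
  exact cp_anti _ _

lemma c13y : cp (v s 3 - v s 1) (v s 2 - v s 1) = m0f v s := by
  rw [show v s 3 - v s 1 = (v s 3 - v s 0) - (v s 1 - v s 0) by abel,
    show v s 2 - v s 1 = (v s 2 - v s 0) - (v s 1 - v s 0) by abel, cp_sub_sub,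
    cp_anti (v s 3 - v s 0) (v s 1 - v s 0), cp_anti (v s 2 - v s 0) (v s 3 - v s 0),
    cp_anti (v s 1 - v s 0) (v s 2 - v s 0)]
  simp only [m0f, m1f, m2f, m3f]
  abel

lemma c23x : cp (v s 3 - v s 2) (v s 0 - v s 2) = m1f v s := by
  rw [show v s 3 - v s 2 = (v s 3 - v s 0) - (v s 2 - v s 0) by abel,
    show v s 0 - v s 2 = -(v s 2 - v s 0) by abel, cp_neg_sub]
  rfl

lemma c23y : cp (v s 3 - v s 2) (v s 1 - v s 2) = -(m0f v s) := by
  rw [show v s 3 - v s 2 = (v s 3 - v s 0) - (v s 2 - v s 0) by abel,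
    show v s 1 - v s 2 = (v s 1 - v s 0) - (v s 2 - v s 0) by abel, cp_sub_sub]
  simp only [m0f, m1f, m2f, m3f, neg_neg]

end cpid

/-- The Euclidean Schläfli formula for a tetrahedron: for any smooth one-parameter family
of non-degenerate tetrahedra, `Σ_e l_e · (d/dt) α_e = 0`, summed over the six edges. -/
theorem schlaefli_formula (v : ℝ → Fin 4 → EuclideanSpace ℝ (Fin 3))
    (hsmooth : ∀ i, ContDiff ℝ (⊤ : ℕ∞) fun t => v t i)
    (hnd : ∀ t, AffineIndependent ℝ (v t)) (t : ℝ) :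
    dist (v t 0) (v t 1) *
        deriv (fun s => dihedralAngle (v s 0) (v s 1) (v s 2) (v s 3)) t +
      dist (v t 0) (v t 2) *
        deriv (fun s => dihedralAngle (v s 0) (v s 2) (v s 1) (v s 3)) t +
      dist (v t 0) (v t 3) *
        deriv (fun s => dihedralAngle (v s 0) (v s 3) (v s 1) (v s 2)) t +
      dist (v t 1) (v t 2) *
        deriv (fun s => dihedralAngle (v s 1) (v s 2) (v s 0) (v s 3)) t +
      dist (v t 1) (v t 3) *
        deriv (fun s => dihedralAngle (v s 1) (v s 3) (v s 0) (v s 2)) t +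
      dist (v t 2) (v t 3) *
        deriv (fun s => dihedralAngle (v s 2) (v s 3) (v s 0) (v s 1)) t = 0 := by
  have hvd : ∀ i, Differentiable ℝ fun s => v s i := fun i => (hsmooth i).differentiable (by simp)
  have hinj : ∀ s, Function.Injective (v s) := fun s => (hnd s).injective
  have hD0 : (⟪v t 1 - v t 0, cp (v t 2 - v t 0) (v t 3 - v t 0)⟫ : ℝ) ≠ 0 := det_ne_zero (v t) (hnd t)
  have hD : (0:ℝ) < |(⟪v t 1 - v t 0, cp (v t 2 - v t 0) (v t 3 - v t 0)⟫ : ℝ)| := abs_pos.2 hD0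
  -- positivity of the diagonal Gram entries
  have h11pos : 0 < g11f v t := inner_self_pos_of _ (v t 1 - v t 0) hD0
  have h22pos : 0 < g22f v t := by
    refine inner_self_pos_of _ (v t 2 - v t 0) ?_
    have hc : ⟪v t 2 - v t 0, m2f v t⟫ = (⟪v t 1 - v t 0, cp (v t 2 - v t 0) (v t 3 - v t 0)⟫ : ℝ) := by
      simp only [m2f]; rw [tri_cyc, tri_cyc]
    rw [hc]; exact hD0
  have h33pos : 0 < g33f v t := by
    refine inner_self_pos_of _ (v t 3 - v t 0) ?_
    have hc : ⟪v t 3 - v t 0, m3f v t⟫ = (⟪v t 1 - v t 0, cp (v t 2 - v t 0) (v t 3 - v t 0)⟫ : ℝ) := by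
      simp only [m3f]; rw [tri_cyc]
    rw [hc]; exact hD0
  have h00pos : 0 < g00f v t := by
    refine inner_self_pos_of _ (v t 1 - v t 0) ?_
    have hc : ⟪v t 1 - v t 0, m0f v t⟫ = -(⟪v t 1 - v t 0, cp (v t 2 - v t 0) (v t 3 - v t 0)⟫ : ℝ) := by
      simp only [m0f, m1f, m2f, m3f, inner_neg_right, inner_add_right, inner_cp_left,
        inner_cp_right, add_zero]
    rw [hc]; exact neg_ne_zero.2 hD0
  -- derivatives of the Gram entries
  have H00 : HasDerivAt (g00f v) (deriv (g00f v) t) t := ((diff_g00 hvd).differentiableAt).hasDerivAt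
  have H01 : HasDerivAt (g01f v) (deriv (g01f v) t) t := ((diff_g01 hvd).differentiableAt).hasDerivAt
  have H02 : HasDerivAt (g02f v) (deriv (g02f v) t) t := ((diff_g02 hvd).differentiableAt).hasDerivAt
  have H03 : HasDerivAt (g03f v) (deriv (g03f v) t) t := ((diff_g03 hvd).differentiableAt).hasDerivAt
  have H11 : HasDerivAt (g11f v) (deriv (g11f v) t) t := ((diff_g11 hvd).differentiableAt).hasDerivAt
  have H12 : HasDerivAt (g12f v) (deriv (g12f v) t) t := ((diff_g12 hvd).differentiableAt).hasDerivAt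
  have H13 : HasDerivAt (g13f v) (deriv (g13f v) t) t := ((diff_g13 hvd).differentiableAt).hasDerivAt
  have H22 : HasDerivAt (g22f v) (deriv (g22f v) t) t := ((diff_g22 hvd).differentiableAt).hasDerivAt
  have H23 : HasDerivAt (g23f v) (deriv (g23f v) t) t := ((diff_g23 hvd).differentiableAt).hasDerivAt
  have H33 : HasDerivAt (g33f v) (deriv (g33f v) t) t := ((diff_g33 hvd).differentiableAt).hasDerivAt
  -- derivative row sums
  have hrow0' : deriv (g00f v) t + deriv (g01f v) t + deriv (g02f v) t + deriv (g03f v) t = 0 := by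
    have h := ((H00.add H01).add H02).add H03
    rw [show (g00f v + g01f v + g02f v + g03f v) = fun _ => (0:ℝ) from
      funext (row0 v)] at h
    exact h.unique (hasDerivAt_const t 0)
  have hrow1' : deriv (g01f v) t + deriv (g11f v) t + deriv (g12f v) t + deriv (g13f v) t = 0 := by
    have h := ((H01.add H11).add H12).add H13
    rw [show (g01f v + g11f v + g12f v + g13f v) = fun _ => (0:ℝ) from
      funext (row1 v)] at h
    exact h.unique (hasDerivAt_const t 0)
  have hrow2' : deriv (g02f v) t + deriv (g12f v) t + deriv (g22f v) t + deriv (g23f v) t = 0 := by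
    have h := ((H02.add H12).add H22).add H23
    rw [show (g02f v + g12f v + g22f v + g23f v) = fun _ => (0:ℝ) from
      funext (row2 v)] at h
    exact h.unique (hasDerivAt_const t 0)
  have hrow3' : deriv (g03f v) t + deriv (g13f v) t + deriv (g23f v) t + deriv (g33f v) t = 0 := by
    have h := ((H03.add H13).add H23).add H33
    rw [show (g03f v + g13f v + g23f v + g33f v) = fun _ => (0:ℝ) from
      funext (row3 v)] at h
    exact h.unique (hasDerivAt_const t 0)

  -- edge 01
  have hL01 : (0:ℝ) < dist (v t 0) (v t 1) :=
    dist_pos.2 ((hinj t).ne (by decide : (0:Fin 4) ≠ 1))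
  have huu01 : ⟪(v t 1 - v t 0 : E3), v t 1 - v t 0⟫ = dist (v t 0) (v t 1) ^ 2 := by
    rw [real_inner_self_eq_norm_sq, dist_eq_norm, norm_sub_rev]
  have hlag01 : g33f v t * g22f v t - g23f v t ^ 2
      = |(⟪v t 1 - v t 0, cp (v t 2 - v t 0) (v t 3 - v t 0)⟫ : ℝ)| ^ 2 * dist (v t 0) (v t 1) ^ 2 := by
    have H := lag2 (v t 1 - v t 0) (v t 2 - v t 0) (v t 3 - v t 0)
    rw [c01x v t, c01y v t] at H
    simp only [inner_neg_neg, inner_neg_right, inner_neg_left, neg_neg, neg_sq] at H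
    rw [real_inner_comm (m2f v t) (m3f v t)] at H
    simp only [g33f, g22f, g23f]
    rw [H, sq_abs, huu01]
  have hF01 := edge_fun_eq (fun s => v s 0) (fun s => v s 1) (fun s => v s 2)
    (fun s => v s 3) (fun s => (hinj s).ne (by decide : (1:Fin 4) ≠ 0))
    (g23f v) (g33f v) (g22f v)
    (fun s => by
      rw [c01x v s, c01y v s, inner_neg_right,
        real_inner_comm (m2f v s) (m3f v s)]
      rfl)
    (fun s => by rw [c01x v s, norm_eq_sqrt_real_inner]; rfl)
    (fun s => by rw [c01y v s, norm_neg, norm_eq_sqrt_real_inner]; rfl)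
  have T01 := edge_deriv (fun s => dihedralAngle (v s 0) (v s 1) (v s 2) (v s 3))
    (g23f v) (g33f v) (g22f v)
    (deriv (g23f v) t) (deriv (g33f v) t) (deriv (g22f v) t) t
    H23 H33 H22 h33pos h22pos hF01
    (dist (v t 0) (v t 1)) |(⟪v t 1 - v t 0, cp (v t 2 - v t 0) (v t 3 - v t 0)⟫ : ℝ)| hL01 hD hlag01
  -- edge 02
  have hL02 : (0:ℝ) < dist (v t 0) (v t 2) :=
    dist_pos.2 ((hinj t).ne (by decide : (0:Fin 4) ≠ 2))
  have huu02 : ⟪(v t 2 - v t 0 : E3), v t 2 - v t 0⟫ = dist (v t 0) (v t 2) ^ 2 := by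
    rw [real_inner_self_eq_norm_sq, dist_eq_norm, norm_sub_rev]
  have htri02 : (⟪v t 2 - v t 0, cp (v t 1 - v t 0) (v t 3 - v t 0)⟫ : ℝ) ^ 2 = (⟪v t 1 - v t 0, cp (v t 2 - v t 0) (v t 3 - v t 0)⟫ : ℝ) ^ 2 := by rw [tri_swap]; ring
  have hlag02 : g33f v t * g11f v t - g13f v t ^ 2
      = |(⟪v t 1 - v t 0, cp (v t 2 - v t 0) (v t 3 - v t 0)⟫ : ℝ)| ^ 2 * dist (v t 0) (v t 2) ^ 2 := by
    have H := lag2 (v t 2 - v t 0) (v t 1 - v t 0) (v t 3 - v t 0)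
    rw [c02x v t, c02y v t] at H
    simp only [inner_neg_neg, inner_neg_right, inner_neg_left, neg_neg, neg_sq] at H
    rw [real_inner_comm (m1f v t) (m3f v t)] at H
    simp only [g33f, g11f, g13f]
    rw [H, htri02, sq_abs, huu02]
  have hF02 := edge_fun_eq (fun s => v s 0) (fun s => v s 2) (fun s => v s 1)
    (fun s => v s 3) (fun s => (hinj s).ne (by decide : (2:Fin 4) ≠ 0))
    (g13f v) (g33f v) (g11f v)
    (fun s => by
      rw [c02x v s, c02y v s, inner_neg_left,
        real_inner_comm (m1f v s) (m3f v s)]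
      rfl)
    (fun s => by rw [c02x v s, norm_neg, norm_eq_sqrt_real_inner]; rfl)
    (fun s => by rw [c02y v s, norm_eq_sqrt_real_inner]; rfl)
  have T02 := edge_deriv (fun s => dihedralAngle (v s 0) (v s 2) (v s 1) (v s 3))
    (g13f v) (g33f v) (g11f v)
    (deriv (g13f v) t) (deriv (g33f v) t) (deriv (g11f v) t) t
    H13 H33 H11 h33pos h11pos hF02
    (dist (v t 0) (v t 2)) |(⟪v t 1 - v t 0, cp (v t 2 - v t 0) (v t 3 - v t 0)⟫ : ℝ)| hL02 hD hlag02
  -- edge 03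
  have hL03 : (0:ℝ) < dist (v t 0) (v t 3) :=
    dist_pos.2 ((hinj t).ne (by decide : (0:Fin 4) ≠ 3))
  have huu03 : ⟪(v t 3 - v t 0 : E3), v t 3 - v t 0⟫ = dist (v t 0) (v t 3) ^ 2 := by
    rw [real_inner_self_eq_norm_sq, dist_eq_norm, norm_sub_rev]
  have htri03 : (⟪v t 3 - v t 0, cp (v t 1 - v t 0) (v t 2 - v t 0)⟫ : ℝ) ^ 2 = (⟪v t 1 - v t 0, cp (v t 2 - v t 0) (v t 3 - v t 0)⟫ : ℝ) ^ 2 := by rw [tri_cyc]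
  have hlag03 : g22f v t * g11f v t - g12f v t ^ 2
      = |(⟪v t 1 - v t 0, cp (v t 2 - v t 0) (v t 3 - v t 0)⟫ : ℝ)| ^ 2 * dist (v t 0) (v t 3) ^ 2 := by
    have H := lag2 (v t 3 - v t 0) (v t 1 - v t 0) (v t 2 - v t 0)
    rw [c03x v t, c03y v t] at H
    simp only [inner_neg_neg, inner_neg_right, inner_neg_left, neg_neg, neg_sq] at H
    rw [real_inner_comm (m1f v t) (m2f v t)] at H
    simp only [g22f, g11f, g12f]
    rw [H, htri03, sq_abs, huu03]
  have hF03 := edge_fun_eq (fun s => v s 0) (fun s => v s 3) (fun s => v s 1)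
    (fun s => v s 2) (fun s => (hinj s).ne (by decide : (3:Fin 4) ≠ 0))
    (g12f v) (g22f v) (g11f v)
    (fun s => by
      rw [c03x v s, c03y v s, inner_neg_right,
        real_inner_comm (m1f v s) (m2f v s)]
      rfl)
    (fun s => by rw [c03x v s, norm_eq_sqrt_real_inner]; rfl)
    (fun s => by rw [c03y v s, norm_neg, norm_eq_sqrt_real_inner]; rfl)
  have T03 := edge_deriv (fun s => dihedralAngle (v s 0) (v s 3) (v s 1) (v s 2))
    (g12f v) (g22f v) (g11f v)
    (deriv (g12f v) t) (deriv (g22f v) t) (deriv (g11f v) t) t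
    H12 H22 H11 h22pos h11pos hF03
    (dist (v t 0) (v t 3)) |(⟪v t 1 - v t 0, cp (v t 2 - v t 0) (v t 3 - v t 0)⟫ : ℝ)| hL03 hD hlag03
  -- edge 12
  have hL12 : (0:ℝ) < dist (v t 1) (v t 2) :=
    dist_pos.2 ((hinj t).ne (by decide : (1:Fin 4) ≠ 2))
  have huu12 : ⟪(v t 2 - v t 1 : E3), v t 2 - v t 1⟫ = dist (v t 1) (v t 2) ^ 2 := by
    rw [real_inner_self_eq_norm_sq, dist_eq_norm, norm_sub_rev]
  have htri12 : (⟪v t 2 - v t 1, cp (v t 0 - v t 1) (v t 3 - v t 1)⟫ : ℝ) ^ 2 = (⟪v t 1 - v t 0, cp (v t 2 - v t 0) (v t 3 - v t 0)⟫ : ℝ) ^ 2 := by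
    rw [show v t 2 - v t 1 = (v t 2 - v t 0) - (v t 1 - v t 0) by abel,
      show v t 0 - v t 1 = -(v t 1 - v t 0) by abel,
      show v t 3 - v t 1 = (v t 3 - v t 0) - (v t 1 - v t 0) by abel, tri_sub]
  have hlag12 : g33f v t * g00f v t - g03f v t ^ 2
      = |(⟪v t 1 - v t 0, cp (v t 2 - v t 0) (v t 3 - v t 0)⟫ : ℝ)| ^ 2 * dist (v t 1) (v t 2) ^ 2 := by
    have H := lag2 (v t 2 - v t 1) (v t 0 - v t 1) (v t 3 - v t 1)
    rw [c12x v t, c12y v t] at H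
    simp only [inner_neg_neg, inner_neg_right, inner_neg_left, neg_neg, neg_sq] at H
    rw [real_inner_comm (m0f v t) (m3f v t)] at H
    simp only [g33f, g00f, g03f]
    rw [H, htri12, sq_abs, huu12]
  have hF12 := edge_fun_eq (fun s => v s 1) (fun s => v s 2) (fun s => v s 0)
    (fun s => v s 3) (fun s => (hinj s).ne (by decide : (2:Fin 4) ≠ 1))
    (g03f v) (g33f v) (g00f v)
    (fun s => by
      rw [c12x v s, c12y v s, inner_neg_right,
        real_inner_comm (m0f v s) (m3f v s)]
      rfl)
    (fun s => by rw [c12x v s, norm_eq_sqrt_real_inner]; rfl)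
    (fun s => by rw [c12y v s, norm_neg, norm_eq_sqrt_real_inner]; rfl)
  have T12 := edge_deriv (fun s => dihedralAngle (v s 1) (v s 2) (v s 0) (v s 3))
    (g03f v) (g33f v) (g00f v)
    (deriv (g03f v) t) (deriv (g33f v) t) (deriv (g00f v) t) t
    H03 H33 H00 h33pos h00pos hF12
    (dist (v t 1) (v t 2)) |(⟪v t 1 - v t 0, cp (v t 2 - v t 0) (v t 3 - v t 0)⟫ : ℝ)| hL12 hD hlag12
  -- edge 13
  have hL13 : (0:ℝ) < dist (v t 1) (v t 3) :=
    dist_pos.2 ((hinj t).ne (by decide : (1:Fin 4) ≠ 3))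
  have huu13 : ⟪(v t 3 - v t 1 : E3), v t 3 - v t 1⟫ = dist (v t 1) (v t 3) ^ 2 := by
    rw [real_inner_self_eq_norm_sq, dist_eq_norm, norm_sub_rev]
  have htri13 : (⟪v t 3 - v t 1, cp (v t 0 - v t 1) (v t 2 - v t 1)⟫ : ℝ) ^ 2 = (⟪v t 1 - v t 0, cp (v t 2 - v t 0) (v t 3 - v t 0)⟫ : ℝ) ^ 2 := by
    rw [show v t 3 - v t 1 = (v t 3 - v t 0) - (v t 1 - v t 0) by abel,
      show v t 0 - v t 1 = -(v t 1 - v t 0) by abel,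
      show v t 2 - v t 1 = (v t 2 - v t 0) - (v t 1 - v t 0) by abel, tri_sub,
      cp_anti (v t 2 - v t 0) (v t 3 - v t 0), inner_neg_right]
    ring
  have hlag13 : g22f v t * g00f v t - g02f v t ^ 2
      = |(⟪v t 1 - v t 0, cp (v t 2 - v t 0) (v t 3 - v t 0)⟫ : ℝ)| ^ 2 * dist (v t 1) (v t 3) ^ 2 := by
    have H := lag2 (v t 3 - v t 1) (v t 0 - v t 1) (v t 2 - v t 1)
    rw [c13x v t, c13y v t] at H
    simp only [inner_neg_neg, inner_neg_right, inner_neg_left, neg_neg, neg_sq] at H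
    rw [real_inner_comm (m0f v t) (m2f v t)] at H
    simp only [g22f, g00f, g02f]
    rw [H, htri13, sq_abs, huu13]
  have hF13 := edge_fun_eq (fun s => v s 1) (fun s => v s 3) (fun s => v s 0)
    (fun s => v s 2) (fun s => (hinj s).ne (by decide : (3:Fin 4) ≠ 1))
    (g02f v) (g22f v) (g00f v)
    (fun s => by
      rw [c13x v s, c13y v s, inner_neg_left,
        real_inner_comm (m0f v s) (m2f v s)]
      rfl)
    (fun s => by rw [c13x v s, norm_neg, norm_eq_sqrt_real_inner]; rfl)
    (fun s => by rw [c13y v s, norm_eq_sqrt_real_inner]; rfl)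
  have T13 := edge_deriv (fun s => dihedralAngle (v s 1) (v s 3) (v s 0) (v s 2))
    (g02f v) (g22f v) (g00f v)
    (deriv (g02f v) t) (deriv (g22f v) t) (deriv (g00f v) t) t
    H02 H22 H00 h22pos h00pos hF13
    (dist (v t 1) (v t 3)) |(⟪v t 1 - v t 0, cp (v t 2 - v t 0) (v t 3 - v t 0)⟫ : ℝ)| hL13 hD hlag13
  -- edge 23
  have hL23 : (0:ℝ) < dist (v t 2) (v t 3) :=
    dist_pos.2 ((hinj t).ne (by decide : (2:Fin 4) ≠ 3))
  have huu23 : ⟪(v t 3 - v t 2 : E3), v t 3 - v t 2⟫ = dist (v t 2) (v t 3) ^ 2 := by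
    rw [real_inner_self_eq_norm_sq, dist_eq_norm, norm_sub_rev]
  have htri23 : (⟪v t 3 - v t 2, cp (v t 0 - v t 2) (v t 1 - v t 2)⟫ : ℝ) ^ 2 = (⟪v t 1 - v t 0, cp (v t 2 - v t 0) (v t 3 - v t 0)⟫ : ℝ) ^ 2 := by
    rw [show v t 3 - v t 2 = (v t 3 - v t 0) - (v t 2 - v t 0) by abel,
      show v t 1 - v t 2 = (v t 1 - v t 0) - (v t 2 - v t 0) by abel,
      show v t 0 - v t 2 = -(v t 2 - v t 0) by abel, tri_sub, tri_cyc, tri_cyc]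
  have hlag23 : g11f v t * g00f v t - g01f v t ^ 2
      = |(⟪v t 1 - v t 0, cp (v t 2 - v t 0) (v t 3 - v t 0)⟫ : ℝ)| ^ 2 * dist (v t 2) (v t 3) ^ 2 := by
    have H := lag2 (v t 3 - v t 2) (v t 0 - v t 2) (v t 1 - v t 2)
    rw [c23x v t, c23y v t] at H
    simp only [inner_neg_neg, inner_neg_right, inner_neg_left, neg_neg, neg_sq] at H
    rw [real_inner_comm (m0f v t) (m1f v t)] at H
    simp only [g11f, g00f, g01f]
    rw [H, htri23, sq_abs, huu23]
  have hF23 := edge_fun_eq (fun s => v s 2) (fun s => v s 3) (fun s => v s 0)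
    (fun s => v s 1) (fun s => (hinj s).ne (by decide : (3:Fin 4) ≠ 2))
    (g01f v) (g11f v) (g00f v)
    (fun s => by
      rw [c23x v s, c23y v s, inner_neg_right,
        real_inner_comm (m0f v s) (m1f v s)]
      rfl)
    (fun s => by rw [c23x v s, norm_eq_sqrt_real_inner]; rfl)
    (fun s => by rw [c23y v s, norm_neg, norm_eq_sqrt_real_inner]; rfl)
  have T23 := edge_deriv (fun s => dihedralAngle (v s 2) (v s 3) (v s 0) (v s 1))
    (g01f v) (g11f v) (g00f v)
    (deriv (g01f v) t) (deriv (g11f v) t) (deriv (g00f v) t) t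
    H01 H11 H00 h11pos h00pos hF23
    (dist (v t 2) (v t 3)) |(⟪v t 1 - v t 0, cp (v t 2 - v t 0) (v t 3 - v t 0)⟫ : ℝ)| hL23 hD hlag23
  have hkey := key_algebra (g00f v t) (g11f v t) (g22f v t) (g33f v t)
    (g01f v t) (g02f v t) (g03f v t) (g12f v t) (g13f v t) (g23f v t)
    (deriv (g00f v) t) (deriv (g11f v) t) (deriv (g22f v) t) (deriv (g33f v) t)
    (deriv (g01f v) t) (deriv (g02f v) t) (deriv (g03f v) t)
    (deriv (g12f v) t) (deriv (g13f v) t) (deriv (g23f v) t)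
    (Real.sqrt (g00f v t)) (Real.sqrt (g11f v t)) (Real.sqrt (g22f v t)) (Real.sqrt (g33f v t))
    (Real.sqrt_pos.2 h00pos) (Real.sqrt_pos.2 h11pos) (Real.sqrt_pos.2 h22pos)
    (Real.sqrt_pos.2 h33pos)
    (Real.sq_sqrt h00pos.le) (Real.sq_sqrt h11pos.le) (Real.sq_sqrt h22pos.le)
    (Real.sq_sqrt h33pos.le)
    (row0 v t) (row1 v t) (row2 v t) (row3 v t) hrow0' hrow1' hrow2' hrow3'
  rw [T01, T02, T03, T12, T13, T23]
  linear_combination (-(1 / |(⟪v t 1 - v t 0, cp (v t 2 - v t 0) (v t 3 - v t 0)⟫ : ℝ)|)) * hkey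
end
end

section
/- Consider the π/6-twisted Schönhardt polyhedron with vertices A, B, C (top unit equilateral triangle) and D, E, F (bottom unit equilateral triangle rotated so the total twist angle is π/6), with edges AE, AF, BD, BF, CD, CE, AB, BC, CA, DE, EF, FD. There exists an assignment q of vectors to the six vertices with q(D) = q(E) = q(F) = 0 and q(A), q(B), q(C) ≠ 0 such that ⟨v_i − v_j, q(v_i) − q(v_j)⟩ = 0 for every edge v_i v_j, and q is not the restriction of any Killing field of ℝ³. Hence the π/6-twisted Schönhardt polyhedron is infinitesimally flexible. -/
/-!
Keep the bottom triangle `DEF` fixed and give `A` the velocity `(0, 4, 1)`, which is orthogonal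
to `A - E` and `A - F`; the velocities of `B` and `C` are its images under the rotation by `2π/3`
about the vertical axis, which permutes the vertices, so every edge condition holds. A Killing
field `p ↦ M p + b` acts as `p ↦ ω × p + b`, so if it vanishes at the non-collinear points
`D, E, F` then `ω` is parallel to both `E - D` and `F - D`, hence `ω = 0 = b`; it cannot move `A`.
-/

open Real Matrix

section SkewSymmetric

variable {K : Type*} [Field K]

theorem eq_zero_of_cross_eq_zero_of_cross_ne_zero {ω u v : Fin 3 → K}
    (hu : ω ⨯₃ u = 0) (hv : ω ⨯₃ v = 0) (huv : u ⨯₃ v ≠ 0) : ω = 0 := by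
  have hind := crossProduct_ne_zero_iff_linearIndependent.mp huv
  have parallel : ∀ w, w ≠ 0 → ω ⨯₃ w = 0 → ∃ a : K, a • w = ω := fun w hw h => by
    have : ¬LinearIndependent K ![w, ω] := by
      rw [← crossProduct_ne_zero_iff_linearIndependent, ← cross_anticomm, h, neg_zero, not_not]
    simpa [LinearIndependent.pair_iff' hw] using this
  obtain ⟨a, rfl⟩ := parallel u (hind.ne_zero 0) hu
  obtain ⟨b, hb⟩ := parallel v (hind.ne_zero 1) hv
  have := LinearIndependent.pair_iff.mp hind a (-b) (by rw [neg_smul, hb, add_neg_cancel])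
  rw [this.1, zero_smul]

def skewAxis (M : Matrix (Fin 3) (Fin 3) K) : Fin 3 → K := ![M 2 1, M 0 2, M 1 0]

theorem mulVec_eq_skewAxis_cross [CharZero K] {M : Matrix (Fin 3) (Fin 3) K} (hM : Mᵀ = -M)
    (p : Fin 3 → K) : M *ᵥ p = skewAxis M ⨯₃ p := by
  have skew : ∀ i j, M j i = -M i j := fun i j => by
    simpa using congrFun (congrFun hM i) j
  have diag : ∀ i, M i i = 0 := fun i => CharZero.eq_neg_self_iff.mp (skew i i)
  ext i
  fin_cases i <;> simp [skewAxis, cross_apply, mulVec, vec3_dotProduct, diag, skew 0 1, skew 0 2,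
    skew 1 2] <;> ring

theorem skew_mulVec_add_eq_zero_of_eq_zero_on_triangle [CharZero K]
    {M : Matrix (Fin 3) (Fin 3) K} {b D E F : Fin 3 → K} (hM : Mᵀ = -M)
    (hD : M *ᵥ D + b = 0) (hE : M *ᵥ E + b = 0) (hF : M *ᵥ F + b = 0)
    (hDEF : (E - D) ⨯₃ (F - D) ≠ 0) (p : Fin 3 → K) : M *ᵥ p + b = 0 := by
  have edge : ∀ X, M *ᵥ X + b = 0 → skewAxis M ⨯₃ (X - D) = 0 := fun X hX => by
    rw [← mulVec_eq_skewAxis_cross hM, mulVec_sub, ← add_sub_add_right_eq_sub, hX, hD, sub_zero]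
  have hAxis := eq_zero_of_cross_eq_zero_of_cross_ne_zero (edge E hE) (edge F hF) hDEF
  have hMzero : ∀ X, M *ᵥ X = 0 := fun X => by
    rw [mulVec_eq_skewAxis_cross hM, hAxis, map_zero, LinearMap.zero_apply]
  simpa [hMzero] using hD

end SkewSymmetric

section Trigonometry

theorem cos_two_mul_pi_div_three : cos (2 * π / 3) = -(1 / 2) := by
  rw [show 2 * π / 3 = π - π / 3 by ring, cos_pi_sub, cos_pi_div_three]

theorem sin_two_mul_pi_div_three : sin (2 * π / 3) = √3 / 2 := by
  rw [show 2 * π / 3 = π - π / 3 by ring, sin_pi_sub, sin_pi_div_three]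

theorem cos_four_mul_pi_div_three : cos (4 * π / 3) = -(1 / 2) := by
  rw [show 4 * π / 3 = π / 3 + π by ring, cos_add_pi, cos_pi_div_three]

theorem sin_four_mul_pi_div_three : sin (4 * π / 3) = -(√3 / 2) := by
  rw [show 4 * π / 3 = π / 3 + π by ring, sin_add_pi, sin_pi_div_three]

theorem cos_five_mul_pi_div_six : cos (5 * π / 6) = -(√3 / 2) := by
  rw [show 5 * π / 6 = π - π / 6 by ring, cos_pi_sub, cos_pi_div_six]

theorem sin_five_mul_pi_div_six : sin (5 * π / 6) = 1 / 2 := by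
  rw [show 5 * π / 6 = π - π / 6 by ring, sin_pi_sub, sin_pi_div_six]

end Trigonometry

/-- The π/6-twisted Schönhardt polyhedron is infinitesimally flexible: keeping the bottom
triangle `DEF` fixed (`q(D) = q(E) = q(F) = 0`), there are nonzero vectors at `A, B, C`
giving an infinitesimal isometric deformation on all edges which is not the restriction
of any Killing field `p ↦ M p + b` with `M` skew-symmetric. -/
theorem schonhardt_infinitesimally_flexible
    (A B C D E F : Fin 3 → ℝ)
    (hA : A = ![1, 0, 1])
    (hB : B = ![Real.cos (2 * π / 3), Real.sin (2 * π / 3), 1])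
    (hC : C = ![Real.cos (4 * π / 3), Real.sin (4 * π / 3), 1])
    (hD : D = ![0, -1, -1])
    (hE : E = ![Real.cos (π / 6), Real.sin (π / 6), -1])
    (hF : F = ![Real.cos (5 * π / 6), Real.sin (5 * π / 6), -1]) :
    ∃ qA qB qC : Fin 3 → ℝ,
      qA ≠ 0 ∧ qB ≠ 0 ∧ qC ≠ 0 ∧
      (A - E) ⬝ᵥ qA = 0 ∧ (A - F) ⬝ᵥ qA = 0 ∧
      (B - D) ⬝ᵥ qB = 0 ∧ (B - F) ⬝ᵥ qB = 0 ∧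
      (C - D) ⬝ᵥ qC = 0 ∧ (C - E) ⬝ᵥ qC = 0 ∧
      (A - B) ⬝ᵥ (qA - qB) = 0 ∧ (B - C) ⬝ᵥ (qB - qC) = 0 ∧
      (C - A) ⬝ᵥ (qC - qA) = 0 ∧
      ¬∃ (M : Matrix (Fin 3) (Fin 3) ℝ) (b : Fin 3 → ℝ), Mᵀ = -M ∧
          qA = M.mulVec A + b ∧ qB = M.mulVec B + b ∧ qC = M.mulVec C + b ∧
          (0 : Fin 3 → ℝ) = M.mulVec D + b ∧ (0 : Fin 3 → ℝ) = M.mulVec E + b ∧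
          (0 : Fin 3 → ℝ) = M.mulVec F + b := by
  subst hA hB hC hD hE hF
  simp only [cos_two_mul_pi_div_three, sin_two_mul_pi_div_three, cos_four_mul_pi_div_three,
    sin_four_mul_pi_div_three, cos_pi_div_six, sin_pi_div_six, cos_five_mul_pi_div_six,
    sin_five_mul_pi_div_six]
  have hDEF : (![√3 / 2, 1 / 2, -1] - ![0, -1, -1]) ⨯₃ (![-(√3 / 2), 1 / 2, -1] - ![0, -1, -1])
      ≠ (0 : Fin 3 → ℝ) := fun h => by
    have h2 := congrFun h 2
    simp only [cross_apply, Pi.sub_apply, Pi.zero_apply, cons_val, Fin.isValue] at h2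
    linarith [show 0 < √3 by positivity]
  have ne_zero : ∀ x y : ℝ, ![x, y, 1] ≠ 0 := fun x y h => by simpa using congrFun h 2
  refine ⟨![0, 4, 1], ![-(2 * √3), -2, 1], ![2 * √3, -2, 1], ne_zero _ _, ne_zero _ _,
    ne_zero _ _, ?_, ?_, ?_, ?_, ?_, ?_, ?_, ?_, ?_,
    fun ⟨M, b, hM, hqA, _, _, hD, hE, hF⟩ => ne_zero 0 4 <| hqA.trans <|
      skew_mulVec_add_eq_zero_of_eq_zero_on_triangle hM hD.symm hE.symm hF.symm hDEF _⟩ <;>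
  norm_num <;> ring_nf <;> norm_num
end
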